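/- FQE can have Ω(H) error under confounders with memory, even with unconfounded behavior policy and bounded concentrability. Concretely, consider the confounded MDP with S = {s₁, s₂}, A = {a₁, a₂}, U = {u₀, u₁}, horizon H; reward r(s₁, a₁) = 1 and 0 otherwise; initial state s₁ and initial confounder u₁; confounder dynamics with memory: the next confounder is u₁ if and only if the current confounder is u₁ and the current action is a₁, else u₀; state transitions: next state is s₁ with probability 1 if (u = u₁ and a = a₁), and otherwise next state is s₁ with probability 1/H and s₂ with probability 1 − 1/H; behavior policy π_b(a|s,u) = 1/2 for all a,s,u (so π_b is unconfounded, sensitivity Γ = 1); evaluation policy π_e(a₁|s) = 1 (so π_e(a|s)/π_b(a|s) ≤ 2 for all s,a). Then: (i) the true value satisfies V_1^{π_e}(s₁) = H; and (ii) the infinite-data FQE estimate, defined by f̂_{H+1} ≡ 0 and f̂_h(s,a) = r(s,a) + Σ_{s',u} P_{π_b,h}(u|s,a)·T(s'|s,u,a)·f̂_{h+1}(s', a₁), where P_{π_b,h}(u|s,a) is the exact posterior distribution of the step-h confounder given (s_h, a_h) = (s,a) under the behavior process started from (s₁, u₁), satisfies f̂_1(s₁, a₁) ≤ 2·log₂(H)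 + 9 for all sufficiently large H. Hence V_1^{π_e}(s₁) − Σ_a π_e(a|s₁) f̂_1(s₁, a) ≥ H − 2·log₂(H) − 9. -/

import Mathlib

open Finset

noncomputable section

/-!
States: `s₁ = 0`, `s₂ = 1`; actions: `a₁ = 0`, `a₂ = 1`; confounders: `u₀ = 0`, `u₁ = 1`
(all in `Fin 2`).
-/

/-- Confounder dynamics with memory: the next confounder is `u₁` iff the current
confounder is `u₁` and the current action is `a₁`; otherwise it is `u₀`. -/
def nextU (u a : Fin 2) : Fin 2 := if u = 1 ∧ a = 0 then 1 else 0

/-- State transition probabilities: from `(u, a)` the next state is `s₁` with probability 1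
if `(u = u₁ ∧ a = a₁)`, and otherwise `s₁` with probability `1/H` and `s₂` with
probability `1 − 1/H`. -/
def stateP (H : ℕ) (u a s' : Fin 2) : ℝ :=
  if u = 1 ∧ a = 0 then (if s' = 0 then 1 else 0)
  else (if s' = 0 then 1 / H else 1 - 1 / H)

/-- Joint transition kernel on state–confounder pairs given the action. -/
def transJ (H : ℕ) (p : Fin 2 × Fin 2) (a : Fin 2) (p' : Fin 2 × Fin 2) : ℝ :=
  stateP H p.2 a p'.1 * (if p'.2 = nextU p.2 a then 1 else 0)

/-- Reward: `r(s₁, a₁) = 1` and `0` otherwise. -/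
def rew (s a : Fin 2) : ℝ := if s = 0 ∧ a = 0 then 1 else 0

/-- Occupancy of the behavior process (uniformly random actions, `π_b ≡ 1/2`) over
state–confounder pairs: `occB H k` is the law of `(s_{k+1}, u_{k+1})` started from
`(s₁, u₁)`. -/
def occB (H : ℕ) : ℕ → Fin 2 × Fin 2 → ℝ
  | 0 => fun p => if p = ((0 : Fin 2), (1 : Fin 2)) then 1 else 0
  | (k + 1) => fun p' => ∑ p : Fin 2 × Fin 2, ∑ a : Fin 2,
      occB H k p * (1 / 2) * transJ H p a p'

/-- Exact posterior `P_{π_b,h}(u | s, a)` of the step-`h` confounder given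
`(s_h, a_h) = (s, a)` under the behavior process (actions are uniform, hence independent
of the state–confounder pair). -/
def postB (H : ℕ) (h : ℕ) (s a u : Fin 2) : ℝ :=
  (occB H (h - 1) (s, u) * (1 / 2)) / (∑ u' : Fin 2, occB H (h - 1) (s, u') * (1 / 2))

/-- Infinite-data FQE iterates for evaluation policy `π_e(a₁|s) = 1`, indexed by remaining
steps: `fqeMem H k = f̂_{H+1-k}`, so `f̂_{H+1} ≡ 0` and
`f̂_h(s,a) = r(s,a) + Σ_{s',u} P_{π_b,h}(u|s,a)·T(s'|s,u,a)·f̂_{h+1}(s', a₁)`. -/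
def fqeMem (H : ℕ) : ℕ → Fin 2 → Fin 2 → ℝ
  | 0 => fun _ _ => 0
  | (k + 1) => fun s a => rew s a + ∑ s' : Fin 2, ∑ u : Fin 2,
      postB H (H - k) s a u * stateP H u a s' * fqeMem H k s' 0

/-- Occupancy of the evaluation process (always action `a₁`) started from `(s₁, u₁)`. -/
def occE (H : ℕ) : ℕ → Fin 2 × Fin 2 → ℝ
  | 0 => fun p => if p = ((0 : Fin 2), (1 : Fin 2)) then 1 else 0
  | (k + 1) => fun p' => ∑ p : Fin 2 × Fin 2, occE H k p * transJ H p 0 p'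

/-- True value `V_1^{π_e}(s₁)`: expected total reward over `H` steps of the evaluation
process started at `(s₁, u₁)`. -/
def valE (H : ℕ) : ℝ :=
  ∑ k ∈ Finset.range H, ∑ p : Fin 2 × Fin 2, occE H k p * rew p.1 0

/-! Auxiliary lemmas -/

lemma occE_eq (H k : ℕ) : occE H k = fun p => if p = ((0:Fin 2),(1:Fin 2)) then 1 else 0 := by
  induction k with
  | zero => rfl
  | succ k ih =>
    funext p'
    simp only [occE, ih, Fintype.sum_prod_type, Fin.sum_univ_two]
    simp [transJ, stateP, nextU, Prod.ext_iff]
    fin_cases p' <;> simp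

lemma valE_eq (H : ℕ) : valE H = H := by
  have h1 : ∀ k, ∑ p : Fin 2 × Fin 2, occE H k p * rew p.1 0 = 1 := by
    intro k
    simp [occE_eq, Fintype.sum_prod_type, Fin.sum_univ_two, rew, Prod.ext_iff]
    decide
  simp [valE, h1]

lemma occB_eq (H k : ℕ) :
    occB H k (0,1) = (1/2:ℝ)^k ∧ occB H k (1,1) = 0 ∧
    occB H k (0,0) = (1-(1/2:ℝ)^k) * (1/H) ∧ occB H k (1,0) = (1-(1/2:ℝ)^k)*(1-1/H) := by
  induction k with
  | zero => norm_num [occB, Prod.ext_iff]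
  | succ k ih =>
    obtain ⟨h1, h2, h3, h4⟩ := ih
    have h2' : occB H k 1 = (0:ℝ) := h2
    have h3' : occB H k 0 = (1-(1/2:ℝ)^k) * (1/H) := h3
    refine ⟨?_, ?_, ?_, ?_⟩
    all_goals simp only [occB, Fintype.sum_prod_type, Fin.sum_univ_two, transJ, stateP, nextU]
    all_goals norm_num [Prod.ext_iff, Fin.ext_iff]
    all_goals simp only [h1, h2, h3, h4, h2', h3']
    all_goals ring

/-- The unnormalized posterior denominator at `s₁`. -/
def den (H m : ℕ) : ℝ := (1/2:ℝ)^m + (1-(1/2:ℝ)^m) * (1/H)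

lemma den_pos (H m : ℕ) : 0 < den H m := by
  have h1 : (0:ℝ) < (1/2:ℝ)^m := by positivity
  have h2 : (1/2:ℝ)^m ≤ 1 := pow_le_one₀ (by norm_num) (by norm_num)
  have h3 : (0:ℝ) ≤ 1/(H:ℝ) := by positivity
  have : (0:ℝ) ≤ (1-(1/2:ℝ)^m) * (1/H) := mul_nonneg (by linarith) h3
  unfold den; linarith

lemma den_sum (H m : ℕ) :
    ∑ u' : Fin 2, occB H m ((0:Fin 2), u') * (1/2:ℝ) = den H m * (1/2) := by
  obtain ⟨h1, _, h3, _⟩ := occB_eq H m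
  simp only [Fin.sum_univ_two, h1, h3, den]
  ring

lemma postB_s0_u1 (H h : ℕ) (a : Fin 2) :
    postB H h 0 a 1 = (1/2:ℝ)^(h-1) / den H (h-1) := by
  unfold postB
  rw [den_sum, (occB_eq H (h-1)).1, mul_div_mul_right _ _ (by norm_num : (1/2:ℝ) ≠ 0)]

lemma postB_s0_u0 (H h : ℕ) (a : Fin 2) :
    postB H h 0 a 0 = ((1-(1/2:ℝ)^(h-1)) * (1/H)) / den H (h-1) := by
  unfold postB
  rw [den_sum, (occB_eq H (h-1)).2.2.1, mul_div_mul_right _ _ (by norm_num : (1/2:ℝ) ≠ 0)]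

lemma postB_s0_sum (H h : ℕ) (a : Fin 2) :
    postB H h 0 a 1 + postB H h 0 a 0 = 1 := by
  rw [postB_s0_u1, postB_s0_u0, ← add_div]
  exact div_self (ne_of_gt (den_pos H (h-1)))

lemma postB_s0_u1_nonneg (H h : ℕ) (a : Fin 2) : 0 ≤ postB H h 0 a 1 := by
  rw [postB_s0_u1]
  have := den_pos H (h-1)
  positivity

lemma postB_s0_u0_nonneg (H h : ℕ) (a : Fin 2) : 0 ≤ postB H h 0 a 0 := by
  rw [postB_s0_u0]
  have h2 : (1/2:ℝ)^(h-1) ≤ 1 := pow_le_one₀ (by norm_num) (by norm_num)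
  have := den_pos H (h-1)
  have h3 : (0:ℝ) ≤ 1/(H:ℝ) := by positivity
  apply div_nonneg (mul_nonneg (by linarith) h3) (le_of_lt this)

lemma postB_s0_u1_le_one (H h : ℕ) (a : Fin 2) : postB H h 0 a 1 ≤ 1 := by
  have := postB_s0_sum H h a
  have := postB_s0_u0_nonneg H h a
  linarith

/-- When `H + 1 ≤ 2^(h-1)`, the posterior on `u₁` at `s₁` is at most `1/2`. -/
lemma postB_s0_u1_le_half (H h : ℕ) (a : Fin 2) (hH : 1 ≤ H) (hpow : (H:ℝ) + 1 ≤ 2^(h-1)) :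
    postB H h 0 a 1 ≤ 1/2 := by
  have hm2 : (0:ℝ) < (2:ℝ)^(h-1) := by positivity
  have hHpos : (0:ℝ) < H := by exact_mod_cast hH
  have hc : (1/2:ℝ)^(h-1) = ((2:ℝ)^(h-1))⁻¹ := by rw [one_div, inv_pow]
  have h1 : ((H:ℝ)+1) * (1/2:ℝ)^(h-1) ≤ 1 := by
    rw [hc, ← div_eq_mul_inv, div_le_one hm2]; exact hpow
  have h3 : (1/2:ℝ)^(h-1) ≤ (1-(1/2:ℝ)^(h-1)) * (1/H) := by
    rw [mul_one_div, le_div_iff₀ hHpos]; nlinarith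
  rw [postB_s0_u1, div_le_iff₀ (den_pos H (h-1))]
  unfold den
  linarith

lemma postB_s1 (H h : ℕ) (hH : 2 ≤ H) (hm : 1 ≤ h - 1) (a : Fin 2) :
    postB H h 1 a 1 = 0 ∧ postB H h 1 a 0 = 1 := by
  obtain ⟨_, h2, _, h4⟩ := occB_eq H (h-1)
  have hw : (0:ℝ) < (1-(1/2:ℝ)^(h-1))*(1-1/H) := by
    have hc : (1/2:ℝ)^(h-1) ≤ (1/2:ℝ)^1 := by
      apply pow_le_pow_of_le_one (by norm_num) (by norm_num) hm
    have hH' : (2:ℝ) ≤ H := by exact_mod_cast hH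
    have h5 : 1/(H:ℝ) ≤ 1/2 := by
      rw [div_le_div_iff₀ (by linarith) (by norm_num)]; linarith
    nlinarith
  have hs : ∑ u' : Fin 2, occB H (h-1) ((1:Fin 2), u') * (1/2:ℝ)
      = ((1-(1/2:ℝ)^(h-1))*(1-1/H)) * (1/2) := by
    simp only [Fin.sum_univ_two, h2, h4]; ring
  constructor
  · unfold postB; rw [h2]; simp
  · unfold postB
    rw [hs, h4]
    exact div_self (by positivity)

/-- One-step expansion of FQE at `(s₁, a₁)`. -/
lemma fqe_step0 (H k : ℕ) :
    fqeMem H (k+1) 0 0 = 1 + (postB H (H-k) 0 0 1 + postB H (H-k) 0 0 0 * (1/H)) * fqeMem H k 0 0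
      + postB H (H-k) 0 0 0 * (1-1/H) * fqeMem H k 1 0 := by
  show rew 0 0 + _ = _
  simp only [Fin.sum_univ_two, rew, stateP, nextU]
  norm_num [Fin.ext_iff]
  ring

/-- One-step expansion of FQE at `(s₂, a₁)`. -/
lemma fqe_step1 (H k : ℕ) :
    fqeMem H (k+1) 1 0 = (postB H (H-k) 1 0 1 + postB H (H-k) 1 0 0 * (1/H)) * fqeMem H k 0 0
      + postB H (H-k) 1 0 0 * (1-1/H) * fqeMem H k 1 0 := by
  show rew 1 0 + _ = _
  simp only [Fin.sum_univ_two, rew, stateP, nextU]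
  norm_num [Fin.ext_iff]
  ring
lemma main_inv (H : ℕ) (hH : 2 ≤ H) :
    ∀ k, k ≤ H - 1 →
      0 ≤ fqeMem H k 1 0 ∧ fqeMem H k 1 0 ≤ fqeMem H k 0 0 ∧
      fqeMem H k 0 0 - fqeMem H k 1 0
        ≤ 2 + ((k - (H - 1 - (Nat.log 2 H + 1)) : ℕ) : ℝ) ∧
      fqeMem H k 1 0 ≤ (k : ℝ) * (3 + (Nat.log 2 H : ℝ)) / H := by
  intro k
  induction k with
  | zero =>
    intro _
    norm_num [fqeMem]
  | succ k ih =>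
    intro hk1
    have hk : k ≤ H - 1 := by omega
    obtain ⟨hB0, hBA, hD, hBsum⟩ := ih hk
    have hHpos : (0:ℝ) < H := by
      have : (2:ℝ) ≤ H := by exact_mod_cast hH
      linarith
    have hinv0 : (0:ℝ) ≤ 1/(H:ℝ) := by positivity
    have hinv1 : 1/(H:ℝ) ≤ 1 := by
      rw [div_le_one hHpos]
      have : (2:ℝ) ≤ H := by exact_mod_cast hH
      linarith
    have hA0 : 0 ≤ fqeMem H k 0 0 := le_trans hB0 hBA
    have hs1 := postB_s1 H (H-k) hH (by omega) 0
    have stepB : fqeMem H (k+1) 1 0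
        = (1/H) * fqeMem H k 0 0 + (1-1/H) * fqeMem H k 1 0 := by
      rw [fqe_step1, hs1.1, hs1.2]; ring
    set p := postB H (H-k) 0 0 1 with hpdef
    have hsum := postB_s0_sum H (H-k) 0
    have he : postB H (H-k) 0 0 0 = 1 - p := by linarith
    have stepA : fqeMem H (k+1) 0 0
        = 1 + (p + (1-p)*(1/H)) * fqeMem H k 0 0 + (1-p)*(1-1/H) * fqeMem H k 1 0 := by
      rw [fqe_step0, he]
    have hp0 : 0 ≤ p := postB_s0_u1_nonneg H (H-k) 0
    have hp1 : p ≤ 1 := postB_s0_u1_le_one H (H-k) 0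
    have key : fqeMem H (k+1) 0 0 - fqeMem H (k+1) 1 0
        = 1 + p*(1-1/H)*(fqeMem H k 0 0 - fqeMem H k 1 0) := by
      rw [stepA, stepB]; ring
    have hABn : 0 ≤ fqeMem H k 0 0 - fqeMem H k 1 0 := by linarith
    have hfac0 : 0 ≤ p*(1-1/(H:ℝ)) := mul_nonneg hp0 (by linarith)
    have hfac1 : p*(1-1/(H:ℝ)) ≤ p := mul_le_of_le_one_right hp0 (by linarith)
    refine ⟨?_, ?_, ?_, ?_⟩
    · rw [stepB]
      exact add_nonneg (mul_nonneg hinv0 hA0) (mul_nonneg (by linarith) hB0)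
    · linarith [key, mul_nonneg hfac0 hABn]
    · -- the D bound
      by_cases hcase : k + 1 ≤ H - 1 - (Nat.log 2 H + 1)
      · have hz1 : ((k+1) - (H - 1 - (Nat.log 2 H + 1)) : ℕ) = 0 := by omega
        have hz0 : (k - (H - 1 - (Nat.log 2 H + 1)) : ℕ) = 0 := by omega
        have hD2 : fqeMem H k 0 0 - fqeMem H k 1 0 ≤ 2 := by
          rw [hz0] at hD; simpa using hD
        have hpowN : H + 1 ≤ 2 ^ ((H - k) - 1) := by
          have h1 : H < 2 ^ (Nat.log 2 H + 1) := Nat.lt_pow_succ_log_self (by norm_num) H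
          have h2 : 2 ^ (Nat.log 2 H + 1) ≤ 2 ^ ((H - k) - 1) :=
            Nat.pow_le_pow_right (by norm_num) (by omega)
          omega
        have hphalf : p ≤ 1/2 := by
          apply postB_s0_u1_le_half H (H-k) 0 (by omega)
          exact_mod_cast hpowN
        rw [hz1]
        push_cast
        have t2 : p*(1-1/(H:ℝ))*(fqeMem H k 0 0 - fqeMem H k 1 0)
            ≤ (1/2)*(fqeMem H k 0 0 - fqeMem H k 1 0) :=
          mul_le_mul_of_nonneg_right (le_trans hfac1 hphalf) hABn
        linarith [key]
      · have hc : ((k+1) - (H - 1 - (Nat.log 2 H + 1)) : ℕ)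
            = (k - (H - 1 - (Nat.log 2 H + 1)) : ℕ) + 1 := by omega
        rw [hc]
        push_cast
        have t4 : p*(1-1/(H:ℝ))*(fqeMem H k 0 0 - fqeMem H k 1 0)
            ≤ 1*(fqeMem H k 0 0 - fqeMem H k 1 0) :=
          mul_le_mul_of_nonneg_right (le_trans hfac1 hp1) hABn
        have t5 : (0:ℝ) ≤ ((k - (H - 1 - (Nat.log 2 H + 1)) : ℕ) : ℝ) := Nat.cast_nonneg _
        linarith [key, hD]
    · -- the B bound
      have hkL : ((k - (H - 1 - (Nat.log 2 H + 1)) : ℕ) : ℝ) ≤ (Nat.log 2 H : ℝ) + 1 := by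
        have : (k - (H - 1 - (Nat.log 2 H + 1)) : ℕ) ≤ Nat.log 2 H + 1 := by omega
        exact_mod_cast this
      have hDL : fqeMem H k 0 0 - fqeMem H k 1 0 ≤ 3 + (Nat.log 2 H : ℝ) := by linarith
      rw [stepB]
      have e1 : (1/(H:ℝ)) * fqeMem H k 0 0 + (1-1/H) * fqeMem H k 1 0
          = fqeMem H k 1 0 + (fqeMem H k 0 0 - fqeMem H k 1 0) * (1/H) := by ring
      rw [e1]
      have e2 : (fqeMem H k 0 0 - fqeMem H k 1 0) * (1/(H:ℝ))
          ≤ (3 + (Nat.log 2 H : ℝ)) * (1/H) :=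
        mul_le_mul_of_nonneg_right hDL hinv0
      have e3 : ((k:ℝ)+1) * (3 + (Nat.log 2 H : ℝ)) / H
          = (k:ℝ) * (3 + (Nat.log 2 H : ℝ)) / H + (3 + (Nat.log 2 H : ℝ)) * (1/H) := by ring
      push_cast
      rw [e3]
      linarith

/-- FQE has `Ω(H)` error under confounders with memory, even with an unconfounded
behavior policy (`Γ = 1`) and bounded concentrability: the true value is
`V_1^{π_e}(s₁) = H`, while the infinite-data FQE estimate satisfies
`f̂_1(s₁, a₁) ≤ 2·log₂ H + 9` for all sufficiently large `H`; hence
`V_1^{π_e}(s₁) − Σ_a π_e(a|s₁) f̂_1(s₁, a) ≥ H − 2·log₂ H − 9`. -/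
theorem fqe_fails_under_memory :
    (∀ H : ℕ, 1 ≤ H → valE H = H) ∧
    ∃ H₀ : ℕ, ∀ H : ℕ, H₀ ≤ H →
      fqeMem H H 0 0 ≤ 2 * Real.logb 2 H + 9 ∧
      (H : ℝ) - 2 * Real.logb 2 H - 9 ≤ valE H - fqeMem H H 0 0 := by
  constructor
  · intro H _; exact valE_eq H
  · refine ⟨2, fun H hH => ?_⟩
    have hHpos : (0:ℝ) < H := by
      have : (2:ℝ) ≤ H := by exact_mod_cast hH
      linarith
    have hlog : (Nat.log 2 H : ℝ) ≤ Real.logb 2 H := by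
      rw [Real.le_logb_iff_rpow_le (by norm_num) hHpos, Real.rpow_natCast]
      exact_mod_cast Nat.pow_log_le_self 2 (by omega)
    have hlog0 : (0:ℝ) ≤ (Nat.log 2 H : ℝ) := Nat.cast_nonneg _
    have hbound : fqeMem H H 0 0 ≤ 7 + 2*(Nat.log 2 H : ℝ) := by
      obtain ⟨hB0, hBA, hD, hBsum⟩ := main_inv H hH (H-1) le_rfl
      have hstep := fqe_step0 H (H-1)
      have hH1 : (H-1) + 1 = H := by omega
      rw [hH1] at hstep
      set p := postB H (H-(H-1)) 0 0 1 with hpdef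
      have hsum := postB_s0_sum H (H-(H-1)) 0
      have he : postB H (H-(H-1)) 0 0 0 = 1 - p := by linarith
      rw [he] at hstep
      have hp0 : 0 ≤ p := postB_s0_u1_nonneg H (H-(H-1)) 0
      have hp1 : p ≤ 1 := postB_s0_u1_le_one H (H-(H-1)) 0
      have hinv0 : (0:ℝ) ≤ 1/(H:ℝ) := by positivity
      have hinv1 : 1/(H:ℝ) ≤ 1 := by
        rw [div_le_one hHpos]
        have : (2:ℝ) ≤ H := by exact_mod_cast hH
        linarith
      have c1 : (1-p)*(1-1/(H:ℝ)) * fqeMem H (H-1) 1 0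
          ≤ (1-p)*(1-1/(H:ℝ)) * fqeMem H (H-1) 0 0 :=
        mul_le_mul_of_nonneg_left hBA (mul_nonneg (by linarith) (by linarith))
      have c2 : (p + (1-p)*(1/(H:ℝ))) * fqeMem H (H-1) 0 0
            + (1-p)*(1-1/(H:ℝ)) * fqeMem H (H-1) 0 0 = fqeMem H (H-1) 0 0 := by
        field_simp
        ring
      have hA'le : fqeMem H H 0 0 ≤ 1 + fqeMem H (H-1) 0 0 := by linarith [hstep]
      have hDL : ((H-1 - (H - 1 - (Nat.log 2 H + 1)) : ℕ) : ℝ) ≤ (Nat.log 2 H : ℝ) + 1 := by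
        have : (H-1 - (H - 1 - (Nat.log 2 H + 1)) : ℕ) ≤ Nat.log 2 H + 1 := by omega
        exact_mod_cast this
      have hq : (((H-1:ℕ)):ℝ) * (3+(Nat.log 2 H:ℝ)) / H ≤ 3+(Nat.log 2 H:ℝ) := by
        rw [div_le_iff₀ hHpos]
        have h1 : ((H-1:ℕ):ℝ) ≤ H := by exact_mod_cast Nat.sub_le H 1
        nlinarith
      linarith
    refine ⟨by linarith, ?_⟩
    rw [valE_eq]
    linarith
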